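/- Let m ∈ ℕ, let n = 2m+1, let y ∈ ℕ with 0 ≤ y < 2^n (note y ≠ ȳ automatically since n is odd) where ȳ = 2^n − 1 − y, and write w̄ = w(y). Then the sum b_y = Σ_{x=0, x∉{y,ȳ}}^{2^n-1} i^{w(x)} (-1)^{x·y}, taken in ℂ, satisfies: b_y = (-1)^{w̄} i^{m+w̄} 2^m (1+i) − i^{w̄}(1+i^{2m+1}) if w̄ is even, and b_y = (-1)^{w̄} i^{m+w̄} 2^m (1+i) + i^{w̄}(1+i^{2m+1}) if w̄ is odd. -/

import Mathlib

open Finset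

/-- Hamming weight of a natural number: number of 1s in its binary representation. -/
def hw (x : ℕ) : ℕ := (Nat.digits 2 x).sum

/-- The `j`-th bit of `z`, as a natural number in `{0,1}`. -/
def nbit (z j : ℕ) : ℕ := if z.testBit j then 1 else 0

/-- Partial bitwise dot product `∑_{j=0}^{n-1} z_j x_j`. -/
def ndot (n z x : ℕ) : ℕ := ∑ j ∈ Finset.range n, nbit z j * nbit x j

/-!
Expanding `x` in binary, `i^{w(x)} (-1)^{x·y} = ∏_j (i (-1)^{y_j})^{x_j}`, so the full sum over
`x < 2^n` factors as `∏_j (1 + i (-1)^{y_j}) = (1 + i)^n (-i)^{w(y)}`, using `1 - i = -i (1 + i)`.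
The two excluded terms are `(-i)^{w(y)}` at `x = y` and `i^{n - w(y)} = i^n (-i)^{w(y)}` at `x = ȳ`,
hence `b_y = (-i)^{w(y)} ((1 + i)^n - 1 - i^n)`. For `n = 2m + 1` one has
`(1 + i)^n = (2i)^m (1 + i)`, and the parity of `w(y)` fixes the sign `(-1)^{w(y)}`.
-/

open Complex

section Bits

variable {n x y j : ℕ}

lemma nbit_le_one (z j : ℕ) : nbit z j ≤ 1 := by
  unfold nbit; split <;> simp

lemma nbit_of_lt_two_pow (hx : x < 2 ^ n) : nbit x n = 0 := by
  simp [nbit, Nat.testBit_lt_two_pow hx]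

lemma nbit_two_pow_add_self (hx : x < 2 ^ n) : nbit (2 ^ n + x) n = 1 := by
  simp [nbit, Nat.testBit_two_pow_add_eq, Nat.testBit_lt_two_pow hx]

lemma nbit_two_pow_add_of_lt (x : ℕ) (hj : j < n) : nbit (2 ^ n + x) j = nbit x j := by
  simp [nbit, Nat.testBit_two_pow_add_gt hj]

lemma nbit_two_pow_sub_one_sub (hy : y < 2 ^ n) (hj : j < n) :
    nbit (2 ^ n - 1 - y) j = 1 - nbit y j := by
  rw [Nat.sub_sub, add_comm 1 y]
  by_cases h : y.testBit j <;> simp [nbit, Nat.testBit_two_pow_sub_succ hy, h, hj]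

lemma hw_eq_sum_nbit (hx : x < 2 ^ n) : hw x = ∑ j ∈ range n, nbit x j := by
  induction n generalizing x with
  | zero => simp [Nat.lt_one_iff.mp hx, hw]
  | succ n ih =>
    rcases Nat.eq_zero_or_pos x with rfl | hpos
    · simp [hw, nbit]
    have hdigit : hw x = x % 2 + hw (x / 2) := by
      rw [hw, hw, Nat.digits_def' (by norm_num) hpos, List.sum_cons]
    have hlow : nbit x 0 = x % 2 := by
      rcases Nat.mod_two_eq_zero_or_one x with h | h <;> simp [nbit, Nat.testBit_zero, h]
    have hshift : ∀ j, nbit (x / 2) j = nbit x (j + 1) := by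
      simp [nbit, Nat.testBit_add_one]
    rw [hdigit, ih (by rw [pow_succ] at hx; omega), sum_range_succ', hlow]
    simp only [hshift]
    ring

lemma ndot_self (hy : y < 2 ^ n) : ndot n y y = hw y := by
  rw [ndot, hw_eq_sum_nbit hy]
  refine sum_congr rfl fun j _ => ?_
  rcases Nat.le_one_iff_eq_zero_or_eq_one.mp (nbit_le_one y j) with h | h <;> simp [h]

lemma ndot_two_pow_sub_one_sub (hy : y < 2 ^ n) : ndot n (2 ^ n - 1 - y) y = 0 := by
  refine sum_eq_zero fun j hj => ?_
  rw [nbit_two_pow_sub_one_sub hy (mem_range.mp hj)]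
  rcases Nat.le_one_iff_eq_zero_or_eq_one.mp (nbit_le_one y j) with h | h <;> simp [h]

lemma hw_two_pow_sub_one_sub_add (hy : y < 2 ^ n) : hw (2 ^ n - 1 - y) + hw y = n := by
  rw [hw_eq_sum_nbit (n := n) (by omega), hw_eq_sum_nbit hy, ← sum_add_distrib]
  have hbit : ∀ j ∈ range n, nbit (2 ^ n - 1 - y) j + nbit y j = 1 := fun j hj => by
    rw [nbit_two_pow_sub_one_sub hy (mem_range.mp hj)]
    have := nbit_le_one y j
    omega
  simp [sum_congr rfl hbit]

end Bits

theorem sum_range_two_pow_prod_pow_nbit {R : Type*} [CommSemiring R] (a : ℕ → R) (n : ℕ) :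
    ∑ x ∈ range (2 ^ n), ∏ j ∈ range n, a j ^ nbit x j = ∏ j ∈ range n, (1 + a j) := by
  induction n with
  | zero => simp
  | succ n ih =>
    have hlow : ∀ x ∈ range (2 ^ n), ∏ j ∈ range (n + 1), a j ^ nbit x j =
        ∏ j ∈ range n, a j ^ nbit x j := fun x hx => by
      rw [prod_range_succ, nbit_of_lt_two_pow (mem_range.mp hx), pow_zero, mul_one]
    have hhigh : ∀ x ∈ range (2 ^ n), ∏ j ∈ range (n + 1), a j ^ nbit (2 ^ n + x) j =
        a n * ∏ j ∈ range n, a j ^ nbit x j := fun x hx => by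
      rw [prod_range_succ, nbit_two_pow_add_self (mem_range.mp hx), pow_one, mul_comm,
        prod_congr rfl fun j hj => by rw [nbit_two_pow_add_of_lt x (mem_range.mp hj)]]
    rw [pow_succ, mul_two, sum_range_add, sum_congr rfl hlow, sum_congr rfl hhigh, ← mul_sum, ih,
      prod_range_succ]
    ring

lemma I_pow_hw_mul_neg_one_pow_ndot {n x : ℕ} (y : ℕ) (hx : x < 2 ^ n) :
    I ^ hw x * (-1) ^ ndot n x y = ∏ j ∈ range n, (I * (-1) ^ nbit y j) ^ nbit x j := by
  simp only [mul_pow, prod_mul_distrib, prod_pow_eq_pow_sum, ← hw_eq_sum_nbit hx, ← pow_mul,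
    mul_comm (nbit y _), ndot]

lemma one_add_I_mul_neg_one_pow {b : ℕ} (hb : b ≤ 1) : 1 + I * (-1) ^ b = (1 + I) * (-I) ^ b := by
  rcases Nat.le_one_iff_eq_zero_or_eq_one.mp hb with rfl | rfl
  · simp
  · linear_combination I_sq

theorem sum_I_pow_hw_mul_neg_one_pow_ndot {n y : ℕ} (hy : y < 2 ^ n) :
    ∑ x ∈ range (2 ^ n), I ^ hw x * (-1) ^ ndot n x y = (1 + I) ^ n * (-I) ^ hw y := by
  rw [sum_congr rfl fun x hx => I_pow_hw_mul_neg_one_pow_ndot y (mem_range.mp hx),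
    sum_range_two_pow_prod_pow_nbit,
    prod_congr rfl fun j _ => one_add_I_mul_neg_one_pow (nbit_le_one y j),
    prod_mul_distrib, prod_const, card_range, prod_pow_eq_pow_sum, hw_eq_sum_nbit hy]

theorem sum_filter_ne_self_ne_compl {n y : ℕ} (hn : n ≠ 0) (hy : y < 2 ^ n) :
    ∑ x ∈ (range (2 ^ n)).filter (fun x => x ≠ y ∧ x ≠ 2 ^ n - 1 - y),
        I ^ hw x * (-1) ^ ndot n x y =
      (-I) ^ hw y * ((1 + I) ^ n - 1 - I ^ n) := by
  set yc := 2 ^ n - 1 - y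
  -- `y = yc` would make `2 ^ n - 1` even
  have hne : y ≠ yc := by
    have : 2 ∣ 2 ^ n := dvd_pow_self 2 hn
    omega
  have hfilter : (range (2 ^ n)).filter (fun x => x ≠ y ∧ x ≠ yc) = range (2 ^ n) \ {y, yc} := by
    ext; simp [and_comm]
  have hsub : ({y, yc} : Finset ℕ) ⊆ range (2 ^ n) := by
    simp only [insert_subset_iff, singleton_subset_iff, mem_range]
    omega
  have hcompl : I ^ hw yc = I ^ n * (-I) ^ hw y := by
    rw [← hw_two_pow_sub_one_sub_add hy, pow_add, mul_assoc, ← mul_pow]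
    simp [yc]
  rw [hfilter, sum_sdiff_eq_sub hsub, sum_I_pow_hw_mul_neg_one_pow_ndot hy, sum_pair hne,
    ndot_self hy, ndot_two_pow_sub_one_sub hy, hcompl, neg_pow I]
  ring

lemma one_add_I_pow_two_mul_add_one (m : ℕ) : (1 + I) ^ (2 * m + 1) = 2 ^ m * I ^ m * (1 + I) := by
  have hsq : (1 + I) ^ 2 = 2 * I := by linear_combination I_sq
  rw [pow_succ, pow_mul, hsq, mul_pow]

theorem stmt_12 (m : ℕ) (y : ℕ) (hy : y < 2 ^ (2 * m + 1)) :
    (Even (hw y) →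
      ∑ x ∈ (Finset.range (2 ^ (2 * m + 1))).filter
          (fun x => x ≠ y ∧ x ≠ 2 ^ (2 * m + 1) - 1 - y),
        Complex.I ^ hw x * (-1) ^ ndot (2 * m + 1) x y =
      (-1) ^ hw y * Complex.I ^ (m + hw y) * 2 ^ m * (1 + Complex.I) -
        Complex.I ^ hw y * (1 + Complex.I ^ (2 * m + 1))) ∧
    (Odd (hw y) →
      ∑ x ∈ (Finset.range (2 ^ (2 * m + 1))).filter
          (fun x => x ≠ y ∧ x ≠ 2 ^ (2 * m + 1) - 1 - y),
        Complex.I ^ hw x * (-1) ^ ndot (2 * m + 1) x y =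
      (-1) ^ hw y * Complex.I ^ (m + hw y) * 2 ^ m * (1 + Complex.I) +
        Complex.I ^ hw y * (1 + Complex.I ^ (2 * m + 1))) := by
  rw [sum_filter_ne_self_ne_compl (by omega) hy, one_add_I_pow_two_mul_add_one, neg_pow I]
  refine ⟨fun heven => ?_, fun hodd => ?_⟩
  · rw [heven.neg_one_pow]; ring
  · rw [hodd.neg_one_pow]; ring
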